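/- Every topologically periodic paratopological gyrogroup G satisfies wHs(G) ≤ ω. -/

import Mathlib

open Pointwise

/-- A gyrogroup: a groupoid with identity, inverses, gyroautomorphisms satisfying
the left gyroassociative law and the left loop property. -/
class Gyrogroup (G : Type*) extends Zero G, Neg G, Add G where
  zero_add : ∀ a : G, 0 + a = a
  add_zero : ∀ a : G, a + 0 = a
  neg_add_cancel : ∀ a : G, -a + a = 0
  add_neg_cancel : ∀ a : G, a + -a = 0
  gyr : G → G → G → G
  gyr_bijective : ∀ a b : G, Function.Bijective (gyr a b)
  gyr_add : ∀ a b x y : G, gyr a b (x + y) = gyr a b x + gyr a b y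
  gyrassoc : ∀ a b c : G, a + (b + c) = a + b + gyr a b c
  loop : ∀ a b : G, gyr (a + b) b = gyr a b

/-- The weakly Hausdorff number: the minimum cardinal κ such that every neighborhood U of 0
admits a family γ of neighborhoods of 0 with |γ| ≤ κ and ⋂_{V∈γ}(⊖V) ⊆ U. -/
noncomputable def wHs (G : Type*) [Zero G] [Neg G] [TopologicalSpace G] : Cardinal :=
  sInf {κ : Cardinal | ∀ U ∈ nhds (0 : G), ∃ γ : Set (Set G),
    (∀ V ∈ γ, V ∈ nhds (0 : G)) ∧ Cardinal.mk γ ≤ κ ∧ (⋂ V ∈ γ, -V) ⊆ U}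

/-- Natural multiples in a gyrogroup: 0·a = 0 and (n+1)·a = a ⊕ (n·a). -/
def gyroNsmul {G : Type*} [Gyrogroup G] : ℕ → G → G
  | 0, _ => 0
  | n + 1, a => a + gyroNsmul n a

/-!
Given a neighbourhood `U` of `0`, choose neighbourhoods `U = V₀, V₁, …` of `0` with
`V (n+1) ⊕ V (n+1) ⊆ V n`; the countable family `{V n}` witnesses the bound. Indeed, if `⊖x` lies
in every `V n`, then so does every multiple `m·(⊖x)`. Topological periodicity gives `m ≥ 1` with
`m·x ∈ V 1`, and then `x = m·x ⊕ (m-1)·(⊖x) ∈ V 1 ⊕ V 1 ⊆ U`. That identity holds because left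
translation by `m·x` is the `m`-th iterate of left translation by `x`, whose inverse is left
translation by `⊖x`.
-/

open Topology

section Neighbourhoods

variable {M : Type*} [TopologicalSpace M] [AddZeroClass M] [ContinuousAdd M]

theorem exists_seq_nhds_zero_half {U : Set M} (hU : U ∈ 𝓝 0) :
    ∃ V : ℕ → Set M, V 0 = U ∧ (∀ n, V n ∈ 𝓝 0) ∧
      ∀ n, ∀ v ∈ V (n + 1), ∀ w ∈ V (n + 1), v + w ∈ V n := by
  choose half half_mem half_add using fun (W : Set M) (hW : W ∈ 𝓝 0) => exists_nhds_zero_half hW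
  let S : ℕ → {W : Set M // W ∈ 𝓝 0} :=
    fun n => Nat.rec ⟨U, hU⟩ (fun _ W => ⟨half W.1 W.2, half_mem W.1 W.2⟩) n
  exact ⟨fun n => (S n).1, rfl, fun n => (S n).2, fun n => half_add (S n).1 (S n).2⟩

end Neighbourhoods

namespace Gyrogroup

variable {G : Type*} [Gyrogroup G]

instance toAddZeroClass : AddZeroClass G where
  zero_add := Gyrogroup.zero_add
  add_zero := Gyrogroup.add_zero

theorem add_left_cancel {a b c : G} (h : a + b = a + c) : b = c := by
  have key : ∀ x : G, -a + (a + x) = gyr (-a) a x := fun x => by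
    rw [gyrassoc, neg_add_cancel, Gyrogroup.zero_add]
  exact (gyr_bijective (-a) a).1 (by rw [← key, ← key, h])

theorem gyr_zero_left (a c : G) : gyr 0 a c = c := by
  have h := gyrassoc 0 a c
  rw [Gyrogroup.zero_add, Gyrogroup.zero_add] at h
  exact (add_left_cancel h).symm

theorem gyr_neg_self (a c : G) : gyr (-a) a c = c := by
  rw [← loop, neg_add_cancel, gyr_zero_left]

theorem neg_add_cancel_left (a c : G) : -a + (a + c) = c := by
  rw [gyrassoc, neg_add_cancel, Gyrogroup.zero_add, gyr_neg_self]

theorem neg_neg (a : G) : -(-a) = a :=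
  add_left_cancel (by rw [add_neg_cancel, neg_add_cancel] : -a + -(-a) = -a + a)

theorem add_neg_cancel_left (a c : G) : a + (-a + c) = c := by
  simpa only [neg_neg] using neg_add_cancel_left (-a) c

/-- The left loop property in terms of left translations. -/
theorem add_add_add_eq (a b c : G) : a + b + b + c = a + b + (-a + (a + b + c)) := by
  obtain ⟨d, rfl⟩ := (gyr_bijective a b).2 c
  rw [← loop, ← gyrassoc, loop, ← gyrassoc, neg_add_cancel_left]

def leftNsmul : ℕ → G → G
  | 0, _ => 0
  | n + 1, a => leftNsmul n a + a

theorem leftNsmul_succ_add (n : ℕ) (a c : G) :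
    leftNsmul (n + 1) a + c = a + (leftNsmul n a + c) := by
  induction n generalizing c with
  | zero => simp only [leftNsmul, Gyrogroup.zero_add]
  | succ n ih =>
    calc leftNsmul (n + 2) a + c
        = leftNsmul (n + 1) a + (-leftNsmul n a + (leftNsmul (n + 1) a + c)) :=
          add_add_add_eq _ _ _
      _ = a + (leftNsmul (n + 1) a + c) := by rw [ih, add_neg_cancel_left]

theorem gyroNsmul_eq_leftNsmul (n : ℕ) (a : G) : gyroNsmul n a = leftNsmul n a := by
  induction n with
  | zero => rfl
  | succ n ih =>
    simpa only [gyroNsmul, ih, Gyrogroup.add_zero] using (leftNsmul_succ_add n a 0).symm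

theorem gyroNsmul_add_eq_iterate (n : ℕ) (a c : G) :
    gyroNsmul n a + c = (a + ·)^[n] c := by
  rw [gyroNsmul_eq_leftNsmul]
  induction n generalizing c with
  | zero => exact Gyrogroup.zero_add c
  | succ n ih => rw [leftNsmul_succ_add, ih, Function.iterate_succ_apply']

theorem gyroNsmul_succ_add_gyroNsmul_neg (n : ℕ) (a : G) :
    gyroNsmul (n + 1) a + gyroNsmul n (-a) = a := by
  have cancel : Function.LeftInverse (a + ·)^[n] (-a + ·)^[n] :=
    Function.LeftInverse.iterate (add_neg_cancel_left a) n
  rw [← Gyrogroup.add_zero (gyroNsmul n (-a)), gyroNsmul_add_eq_iterate,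
    gyroNsmul_add_eq_iterate, Function.iterate_succ_apply', cancel, Gyrogroup.add_zero]

theorem gyroNsmul_mem_of_forall_mem {V : ℕ → Set G} (hV0 : ∀ n, (0 : G) ∈ V n)
    (hV : ∀ n, ∀ v ∈ V (n + 1), ∀ w ∈ V (n + 1), v + w ∈ V n) {a : G} (ha : ∀ n, a ∈ V n)
    (m n : ℕ) : gyroNsmul m a ∈ V n := by
  induction m generalizing n with
  | zero => exact hV0 n
  | succ m ih => exact hV n _ (ha (n + 1)) _ (ih (n + 1))

end Gyrogroup

/-- Every topologically periodic paratopological gyrogroup satisfies wHs(G) ≤ ω. -/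
theorem wHs_le_aleph0_of_topPeriodic {G : Type*} [Gyrogroup G] [TopologicalSpace G]
    [ContinuousAdd G]
    (hper : ∀ x : G, ∀ U ∈ nhds (0 : G), ∃ n : ℕ, 0 < n ∧ gyroNsmul n x ∈ U) :
    wHs G ≤ Cardinal.aleph0 := by
  refine csInf_le' fun U hU => ?_
  obtain ⟨V, rfl, hV_nhds, hV⟩ := exists_seq_nhds_zero_half hU
  refine ⟨Set.range V, Set.forall_mem_range.2 hV_nhds,
    Cardinal.mk_le_aleph0_iff.2 (Set.countable_range V).to_subtype, fun x hx => ?_⟩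
  have hneg : ∀ n, -x ∈ V n := fun n => Set.mem_neg.1 (Set.mem_iInter₂.1 hx (V n) ⟨n, rfl⟩)
  obtain ⟨_ | m, hm, hmx⟩ := hper x (V 1) (hV_nhds 1)
  · exact absurd hm (lt_irrefl 0)
  rw [← Gyrogroup.gyroNsmul_succ_add_gyroNsmul_neg m x]
  exact hV 0 _ hmx _
    (Gyrogroup.gyroNsmul_mem_of_forall_mem (fun n => mem_of_mem_nhds (hV_nhds n)) hV hneg m 1)
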